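/- arXiv:1203.1108 — 5 statements merged into one kernel-verified Lean document; each statement's English description precedes it below -/
import Mathlib

section
/- Let k be a field and let σ₁, σ₂ ∈ k[t] be nonconstant polynomials with σ₁′ ≠ 0, σ₂′ ≠ 0 and deg σ₁ > deg σ₂. If f·(dt)^ν and g·(dt)^ν are both semi-invariant forms of the same weight ν ∈ ℤ for (σ₁, σ₂), then f = c·g for some constant c ∈ k∖{0}. -/
open Polynomial

/-- Substitution of a polynomial `σ` into a rational function `h`:
if `h = p/q` then `h ∘ σ = (p ∘ σ)/(q ∘ σ)`. -/
noncomputable def ratComp {k : Type*} [Field k] (h : RatFunc k) (σ : k[X]) : RatFunc k :=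
  algebraMap k[X] (RatFunc k) (h.num.comp σ) / algebraMap k[X] (RatFunc k) (h.denom.comp σ)

/-- The order of a rational function `f` at a point `a` of the affine line. -/
noncomputable def ordAt {k : Type*} [Field k] (f : RatFunc k) (a : k) : ℤ :=
  (f.num.rootMultiplicity a : ℤ) - (f.denom.rootMultiplicity a : ℤ)

/-- `f·(dt)^ν` is a semi-invariant form of weight `ν` for the correspondence `(σ₁, σ₂)`
of the affine line: `f ≠ 0` and `σ₁*ω = λ·σ₂*ω` for some constant `λ ≠ 0`, i.e.
`(f∘σ₁)·(σ₁')^ν = λ·(f∘σ₂)·(σ₂')^ν`. -/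
def SemiInvariant {k : Type*} [Field k] (σ₁ σ₂ : k[X]) (f : RatFunc k) (ν : ℤ) : Prop :=
  f ≠ 0 ∧ ∃ lam : k, lam ≠ 0 ∧
    ratComp f σ₁ * (algebraMap k[X] (RatFunc k) (derivative σ₁)) ^ ν
      = RatFunc.C lam *
        (ratComp f σ₂ * (algebraMap k[X] (RatFunc k) (derivative σ₂)) ^ ν)

/-- A nonconstant polynomial `σ` is tamely ramified if `char k` does not divide its degree
and every root of `σ - c`, for every `c`, has multiplicity prime to `char k`. -/
def TamelyRamified {k : Type*} [Field k] (σ : k[X]) : Prop :=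
  ¬ (ringChar k ∣ σ.natDegree) ∧
    ∀ c a : k, (σ - C c).IsRoot a → ¬ (ringChar k ∣ (σ - C c).rootMultiplicity a)

/-! The quotient `h = f / g` is semi-invariant of weight `0`, i.e. `h ∘ σ₁ = μ · (h ∘ σ₂)`.
Writing `h = p / q` in lowest terms, substitution keeps `p, q` coprime, so `p ∘ σ₁ ∣ p ∘ σ₂` and
`q ∘ σ₁ ∣ q ∘ σ₂`. Comparing degrees, `deg p · deg σ₁ ≤ deg p · deg σ₂` with `deg σ₂ < deg σ₁`
forces `deg p = 0`, and likewise `deg q = 0`. -/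

open scoped nonZeroDivisors

namespace Polynomial

lemma natDegree_pos_of_derivative_ne_zero {R : Type*} [Semiring R] {p : R[X]}
    (hp : derivative p ≠ 0) : 0 < p.natDegree :=
  Nat.pos_of_ne_zero (mt derivative_of_natDegree_zero hp)

variable {R : Type*} [CommRing R] [IsDomain R]

lemma comp_ne_zero_of_natDegree_pos {p σ : R[X]} (hp : p ≠ 0) (hσ : 0 < σ.natDegree) :
    p.comp σ ≠ 0 := by
  rw [Ne, comp_eq_zero_iff, not_or, not_and_or]
  exact ⟨hp, .inr fun h => hσ.ne' (by rw [h, natDegree_C])⟩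

lemma nonZeroDivisors_le_comap_aeval {σ : R[X]} (hσ : 0 < σ.natDegree) :
    R[X]⁰ ≤ R[X]⁰.comap (aeval σ) := fun p hp => by
  rw [Submonoid.mem_comap, mem_nonZeroDivisors_iff_ne_zero] at *
  exact comp_ne_zero_of_natDegree_pos hp hσ

lemma natDegree_eq_zero_of_comp_dvd_comp {p σ₁ σ₂ : R[X]} (h₂ : 0 < σ₂.natDegree)
    (hdeg : σ₂.natDegree < σ₁.natDegree) (hdvd : p.comp σ₁ ∣ p.comp σ₂) : p.natDegree = 0 := by
  by_contra hp
  have hle := natDegree_le_of_dvd hdvd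
    (comp_ne_zero_of_natDegree_pos (ne_zero_of_natDegree_gt (Nat.pos_of_ne_zero hp)) h₂)
  rw [natDegree_comp, natDegree_comp] at hle
  exact (Nat.mul_lt_mul_of_pos_left hdeg (Nat.pos_of_ne_zero hp)).not_ge hle

end Polynomial

section

variable {k : Type*} [Field k]

noncomputable def ratCompAlgHom (σ : k[X]) (hσ : 0 < σ.natDegree) : RatFunc k →ₐ[k] RatFunc k :=
  RatFunc.mapAlgHom (aeval σ) (nonZeroDivisors_le_comap_aeval hσ)

lemma ratComp_eq_ratCompAlgHom {σ : k[X]} (hσ : 0 < σ.natDegree) (h : RatFunc k) :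
    ratComp h σ = ratCompAlgHom σ hσ h :=
  (RatFunc.map_apply (aeval σ) (nonZeroDivisors_le_comap_aeval hσ) h).symm

lemma SemiInvariant.div {σ₁ σ₂ : k[X]} {f g : RatFunc k} {ν : ℤ}
    (h₁' : derivative σ₁ ≠ 0) (h₂' : derivative σ₂ ≠ 0)
    (hf : SemiInvariant σ₁ σ₂ f ν) (hg : SemiInvariant σ₁ σ₂ g ν) :
    SemiInvariant σ₁ σ₂ (f / g) 0 := by
  obtain ⟨hf0, lam₁, hlam₁, e₁⟩ := hf
  obtain ⟨hg0, lam₂, hlam₂, e₂⟩ := hg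
  have h₁ := natDegree_pos_of_derivative_ne_zero h₁'
  have h₂ := natDegree_pos_of_derivative_ne_zero h₂'
  refine ⟨div_ne_zero hf0 hg0, lam₁ / lam₂, div_ne_zero hlam₁ hlam₂, ?_⟩
  rw [ratComp_eq_ratCompAlgHom h₁] at e₁ e₂ ⊢
  rw [ratComp_eq_ratCompAlgHom h₂] at e₁ e₂ ⊢
  set φ := algebraMap k[X] (RatFunc k)
  have hD₁ : φ (derivative σ₁) ^ ν ≠ 0 := zpow_ne_zero _ (by simpa [φ] using h₁')
  have hD₂ : φ (derivative σ₂) ^ ν ≠ 0 := zpow_ne_zero _ (by simpa [φ] using h₂')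
  have hg₁ : ratCompAlgHom σ₁ h₁ g ≠ 0 := by simpa using hg0
  have hg₂ : ratCompAlgHom σ₂ h₂ g ≠ 0 := by simpa using hg0
  rw [zpow_zero, zpow_zero, mul_one, mul_one, map_div₀, map_div₀, map_div₀, div_mul_div_comm,
    div_eq_div_iff hg₁ (mul_ne_zero (by simpa using hlam₂) hg₂)]
  refine mul_right_cancel₀ (mul_ne_zero hD₁ hD₂) ?_
  linear_combination (RatFunc.C lam₂ * ratCompAlgHom σ₂ h₂ g * φ (derivative σ₂) ^ ν) * e₁
    - (RatFunc.C lam₁ * ratCompAlgHom σ₂ h₂ f * φ (derivative σ₂) ^ ν) * e₂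

lemma SemiInvariant.exists_eq_C_of_weight_zero {σ₁ σ₂ : k[X]} {h : RatFunc k}
    (h₂ : 0 < σ₂.natDegree) (hdeg : σ₂.natDegree < σ₁.natDegree)
    (hh : SemiInvariant σ₁ σ₂ h 0) : ∃ c : k, h = RatFunc.C c := by
  obtain ⟨-, μ, hμ, e⟩ := hh
  have h₁ : 0 < σ₁.natDegree := h₂.trans hdeg
  have key : h.num.comp σ₁ * h.denom.comp σ₂ = C μ * h.num.comp σ₂ * h.denom.comp σ₁ := by
    apply IsFractionRing.injective k[X] (RatFunc k)
    have hd₁ := comp_ne_zero_of_natDegree_pos h.denom_ne_zero h₁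
    have hd₂ := comp_ne_zero_of_natDegree_pos h.denom_ne_zero h₂
    simp only [ratComp, zpow_zero, mul_one] at e
    rw [mul_div_assoc', div_eq_div_iff (by simpa using hd₁) (by simpa using hd₂)] at e
    simpa only [map_mul, RatFunc.algebraMap_C] using e
  have hcop : IsCoprime (h.num.comp σ₁) (h.denom.comp σ₁) :=
    (RatFunc.isCoprime_num_denom h).map (aeval σ₁).toRingHom
  have hnum : h.num.comp σ₁ ∣ h.num.comp σ₂ := by
    rw [← (isUnit_C.mpr hμ.isUnit).dvd_mul_left]
    exact hcop.dvd_of_dvd_mul_right ⟨_, key.symm⟩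
  have hdenom : h.denom.comp σ₁ ∣ h.denom.comp σ₂ :=
    hcop.symm.dvd_of_dvd_mul_left ⟨_, key.trans (mul_comm _ _)⟩
  have hdenom_eq : h.denom = 1 :=
    eq_one_of_monic_natDegree_zero (RatFunc.monic_denom h)
      (natDegree_eq_zero_of_comp_dvd_comp h₂ hdeg hdenom)
  obtain ⟨a, hnum_eq⟩ : ∃ a, h.num = C a :=
    ⟨_, eq_C_of_natDegree_eq_zero (natDegree_eq_zero_of_comp_dvd_comp h₂ hdeg hnum)⟩
  refine ⟨a, ?_⟩
  calc h = algebraMap k[X] (RatFunc k) h.num / algebraMap k[X] (RatFunc k) h.denom :=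
        (RatFunc.num_div_denom h).symm
    _ = RatFunc.C a := by rw [hnum_eq, hdenom_eq, map_one, div_one, RatFunc.algebraMap_C]

end

theorem semiInvariant_same_weight_unique_up_to_constant_general
    {k : Type*} [Field k] (σ₁ σ₂ : k[X])
    (h₁' : derivative σ₁ ≠ 0) (h₂' : derivative σ₂ ≠ 0)
    (hdeg : σ₂.natDegree < σ₁.natDegree)
    (ν : ℤ) (f g : RatFunc k)
    (hf : SemiInvariant σ₁ σ₂ f ν) (hg : SemiInvariant σ₁ σ₂ g ν) :
    ∃ c : k, c ≠ 0 ∧ f = RatFunc.C c * g := by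
  obtain ⟨c, hc⟩ := (hf.div h₁' h₂' hg).exists_eq_C_of_weight_zero
    (natDegree_pos_of_derivative_ne_zero h₂') hdeg
  refine ⟨c, ?_, ?_⟩
  · rintro rfl
    exact div_ne_zero hf.1 hg.1 (by simpa using hc)
  · rw [← hc, div_mul_cancel₀ f hg.1]

/-- two semi-invariant forms of the same weight differ by a nonzero constant. -/
theorem semiInvariant_same_weight_unique_up_to_constant
    {k : Type*} [Field k] (σ₁ σ₂ : k[X])
    (h₁ : 0 < σ₁.natDegree) (h₂ : 0 < σ₂.natDegree)
    (h₁' : derivative σ₁ ≠ 0) (h₂' : derivative σ₂ ≠ 0)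
    (hdeg : σ₂.natDegree < σ₁.natDegree)
    (ν : ℤ) (f g : RatFunc k)
    (hf : SemiInvariant σ₁ σ₂ f ν) (hg : SemiInvariant σ₁ σ₂ g ν) :
    ∃ c : k, c ≠ 0 ∧ f = RatFunc.C c * g :=
  semiInvariant_same_weight_unique_up_to_constant_general σ₁ σ₂ h₁' h₂' hdeg ν f g hf hg
end

section
/- Let k be an algebraically closed field and let σ₁, σ₂ ∈ k[t] be nonconstant tamely ramified polynomials of degrees d₁, d₂ with d₁ ≥ 4·d₂. If ω = f·(dt)^ν is a semi-invariant form of weight ν ≥ 1 for (σ₁, σ₂) whose conductor equals 1 (there is exactly one point a ∈ k with ord_a f ≠ 0), then f = c·(t − a)^{−ν} for some a ∈ k and c ∈ k∖{0}; that is, div ω = −ν·a on the affine line. -/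
open Polynomial

/-! Comparing degrees at infinity: for a tame `σ` of degree `d` the pullback has
`deg (σ*ω) = d · (deg f + ν) - ν`, so semi-invariance gives `(deg f + ν)(d₁ - d₂) = 0`,
i.e. `deg f = -ν`. A conductor-one `f` has numerator and denominator supported at a single
point `a`, hence `f = c · (t - a)^(deg f)`. -/

section

variable {K : Type*} [Field K]

theorem RatFunc.intDegree_zpow (x : RatFunc K) (n : ℤ) :
    (x ^ n).intDegree = n * x.intDegree := by
  have hpow (m : ℕ) : (x ^ m).intDegree = m * x.intDegree := by
    rcases eq_or_ne x 0 with rfl | hx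
    · rcases m with _ | m <;> simp [RatFunc.intDegree_zero, RatFunc.intDegree_one]
    induction m with
    | zero => simp [RatFunc.intDegree_one]
    | succ m ih =>
      rw [pow_succ, RatFunc.intDegree_mul (pow_ne_zero _ hx) hx, ih]
      push_cast; ring
  cases n with
  | ofNat m => rw [Int.ofNat_eq_natCast, zpow_natCast, hpow]
  | negSucc m =>
    rw [zpow_negSucc, RatFunc.intDegree_inv, hpow, Int.negSucc_eq]
    push_cast; ring

theorem Polynomial.comp_ne_zero {R : Type*} [Semiring R] [NoZeroDivisors R] {p q : R[X]}
    (hp : p ≠ 0) (hq : q.natDegree ≠ 0) : p.comp q ≠ 0 := fun h =>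
  (comp_eq_zero_iff.mp h).elim hp fun hc => hq (hc.2 ▸ natDegree_C _)

theorem ratComp_ne_zero {f : RatFunc K} {σ : K[X]} (hf : f ≠ 0) (hσ : σ.natDegree ≠ 0) :
    ratComp f σ ≠ 0 :=
  div_ne_zero (RatFunc.algebraMap_ne_zero (comp_ne_zero (RatFunc.num_ne_zero hf) hσ))
    (RatFunc.algebraMap_ne_zero (comp_ne_zero f.denom_ne_zero hσ))

theorem intDegree_ratComp (f : RatFunc K) {σ : K[X]} (hσ : σ.natDegree ≠ 0) :
    (ratComp f σ).intDegree = f.intDegree * σ.natDegree := by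
  rcases eq_or_ne f 0 with rfl | hf
  · simp [ratComp, RatFunc.intDegree_zero]
  rw [ratComp, RatFunc.intDegree_div
      (RatFunc.algebraMap_ne_zero (comp_ne_zero (RatFunc.num_ne_zero hf) hσ))
      (RatFunc.algebraMap_ne_zero (comp_ne_zero f.denom_ne_zero hσ)),
    RatFunc.intDegree_polynomial, RatFunc.intDegree_polynomial, natDegree_comp, natDegree_comp,
    RatFunc.intDegree]
  push_cast; ring

theorem Polynomial.coeff_derivative_natDegree_sub_one_ne_zero {p : K[X]}
    (hp : (p.natDegree : K) ≠ 0) : (derivative p).coeff (p.natDegree - 1) ≠ 0 := by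
  have hd : p.natDegree - 1 + 1 = p.natDegree :=
    Nat.sub_add_cancel (Nat.pos_of_ne_zero fun h => hp (by simp [h]))
  rw [coeff_derivative, hd, ← Nat.cast_add_one, hd, coeff_natDegree]
  exact mul_ne_zero (leadingCoeff_ne_zero.mpr fun h => hp (by simp [h])) hp

theorem Polynomial.derivative_ne_zero_of_natCast_ne_zero {p : K[X]}
    (hp : (p.natDegree : K) ≠ 0) : derivative p ≠ 0 := fun h =>
  coeff_derivative_natDegree_sub_one_ne_zero hp (by rw [h, coeff_zero])

theorem Polynomial.natDegree_derivative_of_natCast_ne_zero {p : K[X]}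
    (hp : (p.natDegree : K) ≠ 0) : (derivative p).natDegree = p.natDegree - 1 :=
  natDegree_eq_of_le_of_coeff_ne_zero (natDegree_derivative_le p)
    (coeff_derivative_natDegree_sub_one_ne_zero hp)

theorem intDegree_ratComp_mul_derivative_zpow {f : RatFunc K} {σ : K[X]}
    (hf : f ≠ 0) (hσ : (σ.natDegree : K) ≠ 0) (ν : ℤ) :
    (ratComp f σ * algebraMap K[X] (RatFunc K) (derivative σ) ^ ν).intDegree
      = f.intDegree * σ.natDegree + ν * (σ.natDegree - 1) := by
  have hd : σ.natDegree ≠ 0 := fun h => hσ (by simp [h])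
  have hσ' := RatFunc.algebraMap_ne_zero (derivative_ne_zero_of_natCast_ne_zero hσ)
  rw [RatFunc.intDegree_mul (ratComp_ne_zero hf hd) (zpow_ne_zero ν hσ'),
    intDegree_ratComp f hd, RatFunc.intDegree_zpow, RatFunc.intDegree_polynomial,
    natDegree_derivative_of_natCast_ne_zero hσ, Nat.cast_sub (Nat.one_le_iff_ne_zero.mpr hd),
    Nat.cast_one]

theorem TamelyRamified.natCast_natDegree_ne_zero {σ : K[X]} (hσ : TamelyRamified σ) :
    (σ.natDegree : K) ≠ 0 := by
  rw [Ne, CharP.cast_eq_zero_iff K (ringChar K)]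
  exact hσ.1

theorem SemiInvariant.intDegree_eq_neg {σ₁ σ₂ : K[X]} {f : RatFunc K} {ν : ℤ}
    (hf : SemiInvariant σ₁ σ₂ f ν) (h₁ : (σ₁.natDegree : K) ≠ 0)
    (h₂ : (σ₂.natDegree : K) ≠ 0)
    (hne : σ₁.natDegree ≠ σ₂.natDegree) : f.intDegree = -ν := by
  obtain ⟨hf0, lam, hlam, heq⟩ := hf
  have hdeg := congrArg RatFunc.intDegree heq
  have hpull₂ : ratComp f σ₂ * algebraMap K[X] (RatFunc K) (derivative σ₂) ^ ν ≠ 0 :=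
    mul_ne_zero (ratComp_ne_zero hf0 fun h => h₂ (by simp [h])) (zpow_ne_zero ν
      (RatFunc.algebraMap_ne_zero (derivative_ne_zero_of_natCast_ne_zero h₂)))
  rw [RatFunc.intDegree_mul ((_root_.map_ne_zero RatFunc.C).mpr hlam) hpull₂,
    RatFunc.intDegree_C, intDegree_ratComp_mul_derivative_zpow hf0 h₁,
    intDegree_ratComp_mul_derivative_zpow hf0 h₂,
    zero_add] at hdeg
  have hprod : (f.intDegree + ν) * ((σ₁.natDegree : ℤ) - σ₂.natDegree) = 0 := by
    linear_combination hdeg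
  rcases mul_eq_zero.mp hprod with h | h <;> omega

theorem Polynomial.eq_C_leadingCoeff_mul_X_sub_C_pow {p : K[X]}
    (hs : p.Splits) {a : K} (h : ∀ x ∈ p.roots, x = a) :
    p = C p.leadingCoeff * (X - C a) ^ p.natDegree := by
  have hroots : p.roots = Multiset.replicate p.natDegree a :=
    Multiset.eq_replicate.mpr ⟨hs.natDegree_eq_card_roots.symm, h⟩
  conv_lhs => rw [hs.eq_prod_roots, hroots, Multiset.map_replicate, Multiset.prod_replicate]

theorem not_isRoot_num_and_denom_of_ordAt_eq_zero {f : RatFunc K} (hf : f ≠ 0) {x : K}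
    (hx : ordAt f x = 0) : ¬ f.num.IsRoot x ∧ ¬ f.denom.IsRoot x := by
  have hmult : f.num.rootMultiplicity x = f.denom.rootMultiplicity x := by
    unfold ordAt at hx; omega
  have hnot : ¬ (f.num.IsRoot x ∧ f.denom.IsRoot x) := fun ⟨hnum, hdenom⟩ =>
    not_isUnit_X_sub_C x (f.isCoprime_num_denom.isUnit_of_dvd'
      (dvd_iff_isRoot.mpr hnum) (dvd_iff_isRoot.mpr hdenom))
  rw [← rootMultiplicity_pos (RatFunc.num_ne_zero hf), ← rootMultiplicity_pos f.denom_ne_zero,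
    hmult] at hnot ⊢
  omega

theorem eq_C_mul_X_sub_C_zpow_intDegree_of_ordAt_eq_zero [IsAlgClosed K] {f : RatFunc K}
    (hf : f ≠ 0) {a : K} (h : ∀ x ≠ a, ordAt f x = 0) :
    f = RatFunc.C f.num.leadingCoeff *
      algebraMap K[X] (RatFunc K) (X - C a) ^ f.intDegree := by
  have hroots {p : K[X]} (hp : ∀ x, ordAt f x = 0 → ¬ p.IsRoot x) : ∀ x ∈ p.roots, x = a :=
    fun x hx => by_contra fun hxa => hp x (h x hxa) (isRoot_of_mem_roots hx)
  have hnum := eq_C_leadingCoeff_mul_X_sub_C_pow (IsAlgClosed.splits f.num)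
    (hroots fun x hx => (not_isRoot_num_and_denom_of_ordAt_eq_zero hf hx).1)
  have hdenom := eq_C_leadingCoeff_mul_X_sub_C_pow (IsAlgClosed.splits f.denom)
    (hroots fun x hx => (not_isRoot_num_and_denom_of_ordAt_eq_zero hf hx).2)
  rw [f.monic_denom.leadingCoeff, C_1, one_mul] at hdenom
  have hXa : algebraMap K[X] (RatFunc K) (X - C a) ≠ 0 :=
    RatFunc.algebraMap_ne_zero (X_sub_C_ne_zero a)
  conv_lhs => rw [← f.num_div_denom, hnum, hdenom]
  rw [RatFunc.intDegree, zpow_sub₀ hXa, zpow_natCast, zpow_natCast, map_mul, map_pow, map_pow,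
    RatFunc.algebraMap_C, mul_div_assoc]

end

theorem conductor_one_implies_flat_general
    {k : Type*} [Field k] [IsAlgClosed k] (σ₁ σ₂ : k[X])
    (ht₁ : TamelyRamified σ₁) (ht₂ : TamelyRamified σ₂)
    (hdeg : 4 * σ₂.natDegree ≤ σ₁.natDegree)
    (ν : ℤ) (f : RatFunc k) (hf : SemiInvariant σ₁ σ₂ f ν)
    (hcond : ∃ a : k, {x : k | ordAt f x ≠ 0} = {a}) :
    ∃ (a : k) (c : k), c ≠ 0 ∧
      f = RatFunc.C c * (algebraMap k[X] (RatFunc k) (X - C a)) ^ (-ν) := by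
  obtain ⟨a, ha⟩ := hcond
  have hd₂ : σ₂.natDegree ≠ 0 := fun h => ht₂.1 (h ▸ dvd_zero _)
  have hintDegree : f.intDegree = -ν := hf.intDegree_eq_neg ht₁.natCast_natDegree_ne_zero
    ht₂.natCast_natDegree_ne_zero (by omega)
  have hoff (x : k) (hx : x ≠ a) : ordAt f x = 0 := by_contra fun h => hx (ha.subset h)
  refine ⟨a, f.num.leadingCoeff, leadingCoeff_ne_zero.mpr (RatFunc.num_ne_zero hf.1), ?_⟩
  rw [← hintDegree]
  exact eq_C_mul_X_sub_C_zpow_intDegree_of_ordAt_eq_zero hf.1 hoff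

/-- if `d₁ ≥ 4·d₂` and the conductor of a semi-invariant form of weight
`ν ≥ 1` equals `1`, then `f = c·(t − a)^{−ν}`, i.e. the form is a flat form of type 1
with `div ω = −ν·a` on the affine line. -/
theorem conductor_one_implies_flat
    {k : Type*} [Field k] [IsAlgClosed k] (σ₁ σ₂ : k[X])
    (h₁ : 0 < σ₁.natDegree) (h₂ : 0 < σ₂.natDegree)
    (ht₁ : TamelyRamified σ₁) (ht₂ : TamelyRamified σ₂)
    (hdeg : 4 * σ₂.natDegree ≤ σ₁.natDegree)
    (ν : ℤ) (hν : 1 ≤ ν) (f : RatFunc k) (hf : SemiInvariant σ₁ σ₂ f ν)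
    (hcond : ∃ a : k, {x : k | ordAt f x ≠ 0} = {a}) :
    ∃ (a : k) (c : k), c ≠ 0 ∧
      f = RatFunc.C c * (algebraMap k[X] (RatFunc k) (X - C a)) ^ (-ν) :=
  conductor_one_implies_flat_general σ₁ σ₂ ht₁ ht₂ hdeg ν f hf hcond
end

section
/- Let k be an algebraically closed field and let σ₁, σ₂ ∈ k[t] be nonconstant tamely ramified polynomials such that σ₁′·σ₂ = l·σ₂′·σ₁ in k[t] for some l ∈ k∖{0} (i.e. the flat weight-1 form dt/t is semi-invariant for (σ₁, σ₂)). Then σ₁ and σ₂ have the same set of roots in k: {a ∈ k : σ₁(a) = 0} = {a ∈ k : σ₂(a) = 0}. -/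
open Polynomial

/-!
At a root `a` of a tamely ramified `σ` the multiplicity drops by exactly one under
differentiation, so `a` is a root of `σ` exactly when `σ'/σ` has a pole at `a`. Comparing
multiplicities at `a` on both sides of `σ₁'·σ₂ = l·σ₂'·σ₁` shows that `σ₁'/σ₁` and `σ₂'/σ₂`
have the same poles.
-/

namespace TamelyRamified

variable {k : Type*} [Field k] {σ : k[X]}

theorem natDegree_ne_zero (h : TamelyRamified σ) : σ.natDegree ≠ 0 :=
  fun h0 => h.1 (h0 ▸ dvd_zero _)

theorem ne_zero (h : TamelyRamified σ) : σ ≠ 0 :=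
  fun h0 => h.natDegree_ne_zero (h0 ▸ natDegree_zero)

theorem derivative_ne_zero (h : TamelyRamified σ) : derivative σ ≠ 0 := by
  have hn : 0 < σ.natDegree := Nat.pos_of_ne_zero h.natDegree_ne_zero
  have hchar : (σ.natDegree : k) ≠ 0 := (ringChar.spec k _).not.2 h.1
  intro h0
  have hcoeff := congrArg (coeff · (σ.natDegree - 1)) h0
  simp only [coeff_derivative, Nat.sub_add_cancel hn, coeff_zero] at hcoeff
  rw [← Nat.cast_add_one, Nat.sub_add_cancel hn] at hcoeff
  exact mul_ne_zero (leadingCoeff_ne_zero.2 h.ne_zero) hchar hcoeff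

theorem cast_rootMultiplicity_ne_zero (h : TamelyRamified σ) {a : k} (ha : σ.IsRoot a) :
    (σ.rootMultiplicity a : k) ≠ 0 := by
  simpa [ringChar.spec] using h.2 0 a (by simpa using ha)

theorem rootMultiplicity_derivative_lt_iff (h : TamelyRamified σ) (a : k) :
    (derivative σ).rootMultiplicity a < σ.rootMultiplicity a ↔ σ.IsRoot a := by
  refine ⟨fun hlt => ?_, fun ha => ?_⟩
  · by_contra ha
    rw [rootMultiplicity_eq_zero ha] at hlt
    exact Nat.not_lt_zero _ hlt
  · rw [derivative_rootMultiplicity_of_root_of_mem_nonZeroDivisors ha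
      (mem_nonZeroDivisors_of_ne_zero (h.cast_rootMultiplicity_ne_zero ha))]
    exact Nat.sub_lt ((rootMultiplicity_pos h.ne_zero).2 ha) one_pos

end TamelyRamified

theorem roots_eq_of_flat_semiInvariant_general
    {k : Type*} [Field k] (σ₁ σ₂ : k[X])
    (ht₁ : TamelyRamified σ₁) (ht₂ : TamelyRamified σ₂)
    (l : k) (hl : l ≠ 0)
    (heq : derivative σ₁ * σ₂ = C l * (derivative σ₂ * σ₁)) :
    {a : k | σ₁.eval a = 0} = {a : k | σ₂.eval a = 0} := by
  ext a
  have hm := congrArg (rootMultiplicity a) heq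
  rw [rootMultiplicity_mul (mul_ne_zero ht₁.derivative_ne_zero ht₂.ne_zero),
    rootMultiplicity_mul (mul_ne_zero (C_ne_zero.2 hl)
      (mul_ne_zero ht₂.derivative_ne_zero ht₁.ne_zero)),
    rootMultiplicity_mul (mul_ne_zero ht₂.derivative_ne_zero ht₁.ne_zero),
    rootMultiplicity_C] at hm
  simp only [Set.mem_ofPred_eq, ← IsRoot.def, ← ht₁.rootMultiplicity_derivative_lt_iff,
    ← ht₂.rootMultiplicity_derivative_lt_iff]
  omega

/-- if the flat weight-1 form `dt/t` is semi-invariant for `(σ₁, σ₂)`,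
i.e. `σ₁'·σ₂ = l·σ₂'·σ₁` for some nonzero constant `l`, and `σ₁`, `σ₂` are nonconstant
tamely ramified polynomials over an algebraically closed field, then `σ₁` and `σ₂` have the
same set of roots. -/
theorem roots_eq_of_flat_semiInvariant
    {k : Type*} [Field k] [IsAlgClosed k] (σ₁ σ₂ : k[X])
    (h₁ : 0 < σ₁.natDegree) (h₂ : 0 < σ₂.natDegree)
    (ht₁ : TamelyRamified σ₁) (ht₂ : TamelyRamified σ₂)
    (l : k) (hl : l ≠ 0)
    (heq : derivative σ₁ * σ₂ = C l * (derivative σ₂ * σ₁)) :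
    {a : k | σ₁.eval a = 0} = {a : k | σ₂.eval a = 0} :=
  roots_eq_of_flat_semiInvariant_general σ₁ σ₂ ht₁ ht₂ l hl heq
end

section
/- Let k be an algebraically closed field of characteristic p > 0 and let σ₁, σ₂ ∈ k[t] be nonconstant polynomials of degrees d₁, d₂ with 2·d₁·d₂ < p, such that σ₁′·σ₂ = l·σ₂′·σ₁ in k[t] for some l ∈ k∖{0} (i.e. the flat weight-1 form dt/t is semi-invariant for (σ₁, σ₂)). Then there exist a polynomial σ ∈ k[t], coprime positive integers m and h, and constants λ₁, λ₂ ∈ k∖{0} such that σ₁ = λ₁·σ^m and σ₂ = λ₂·σ^h; in other words, both σ₁ and σ₂ are obtained from σ by composing with a multiplicative map λ·t^n. -/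
/-!
Write `σᵢ = (t - a)^{mᵢ(a)}·uᵢ` with `uᵢ(a) ≠ 0`. Multiplying `σ₁'σ₂ = l·σ₂'σ₁` by `t - a`,
cancelling `(t - a)^{m₁(a)+m₂(a)}` and evaluating at `a` gives `m₁(a) = l·m₂(a)` in `k`; summing
over the roots, `d₁ = l·d₂`, hence `d₂·m₁(a) = d₁·m₂(a)` in `k`. Both sides are at most `d₁d₂ < p`,
so this holds in `ℕ`: the root multisets satisfy `d₂ • roots σ₁ = d₁ • roots σ₂`, and dividing by
`gcd(d₁, d₂)` writes them as `m • r` and `h • r` with `m, h` coprime. Take `σ = ∏_{a ∈ r} (t - a)`.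
-/

open Polynomial

namespace Multiset

variable {α : Type*} [DecidableEq α]

theorem exists_eq_nsmul_of_forall_dvd_count {s : Multiset α} {m : ℕ}
    (h : ∀ a, m ∣ s.count a) : ∃ r : Multiset α, s = m • r := by
  refine ⟨toFinsupp.symm (s.toFinsupp.mapRange (· / m) (Nat.zero_div m)), toFinsupp.injective ?_⟩
  ext a
  simp [Nat.mul_div_cancel' (h a)]

theorem exists_coprime_nsmul_eq_of_nsmul_eq {s t : Multiset α} {a b : ℕ}
    (ha : 0 < a) (hb : 0 < b) (hst : b • s = a • t) :
    ∃ (r : Multiset α) (m n : ℕ), m.Coprime n ∧ 0 < m ∧ 0 < n ∧ s = m • r ∧ t = n • r := by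
  set g := a.gcd b
  have hg : 0 < g := Nat.gcd_pos_of_pos_left b ha
  have hm : 0 < a / g := Nat.div_pos (Nat.le_of_dvd ha (Nat.gcd_dvd_left a b)) hg
  have hn : 0 < b / g := Nat.div_pos (Nat.le_of_dvd hb (Nat.gcd_dvd_right a b)) hg
  have hreduced : (b / g) • s = (a / g) • t := by
    rw [← nsmul_right_inj hg.ne', ← mul_nsmul', ← mul_nsmul',
      Nat.mul_div_cancel' (Nat.gcd_dvd_right a b), Nat.mul_div_cancel' (Nat.gcd_dvd_left a b), hst]
  have hcop : (a / g).Coprime (b / g) := Nat.coprime_div_gcd_div_gcd hg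
  obtain ⟨r, hr⟩ : ∃ r, s = (a / g) • r := by
    refine exists_eq_nsmul_of_forall_dvd_count fun x => hcop.dvd_of_dvd_mul_left ?_
    rw [← count_nsmul, hreduced, count_nsmul]
    exact dvd_mul_right _ _
  refine ⟨r, a / g, b / g, hcop, hm, hn, hr, ?_⟩
  rw [← nsmul_right_inj hm.ne', ← hreduced, hr, ← mul_nsmul', ← mul_nsmul', mul_comm]

theorem natCast_card_eq_mul_of_natCast_count_eq_mul {R : Type*} [NonAssocSemiring R]
    {s t : Multiset α} {l : R} (h : ∀ a, (s.count a : R) = l * t.count a) :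
    (card s : R) = l * card t := by
  rw [← sum_count_eq_card (s := s.toFinset ∪ t.toFinset) (m := s) (by simp_all),
    ← sum_count_eq_card (s := s.toFinset ∪ t.toFinset) (m := t) (by simp_all)]
  push_cast
  rw [Finset.mul_sum]
  exact Finset.sum_congr rfl fun a _ => h a

theorem card_nsmul_eq_card_nsmul_of_natCast_count_eq_mul {R : Type*} [CommRing R] (p : ℕ)
    [CharP R p] {s t : Multiset α} {l : R} (h : ∀ a, (s.count a : R) = l * t.count a)
    (hp : card s * card t < p) : card t • s = card s • t := by
  ext a
  rw [count_nsmul, count_nsmul]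
  refine CharP.natCast_injOn_Iio R p ?_ ?_ ?_
  · exact lt_of_le_of_lt (Nat.mul_le_mul_left _ (count_le_card a s)) (by rwa [mul_comm])
  · exact lt_of_le_of_lt (Nat.mul_le_mul_left _ (count_le_card a t)) hp
  · push_cast
    rw [h a, natCast_card_eq_mul_of_natCast_count_eq_mul h]
    ring

end Multiset

namespace Polynomial

theorem Splits.eq_C_leadingCoeff_mul_pow {R : Type*} [CommRing R] [IsDomain R] {f : R[X]}
    (hf : Splits f) {m : ℕ} {r : Multiset R} (hr : f.roots = m • r) :
    f = C f.leadingCoeff * (r.map (X - C ·)).prod ^ m :=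
  calc f = C f.leadingCoeff * (f.roots.map (X - C ·)).prod := hf.eq_prod_roots
    _ = C f.leadingCoeff * (r.map (X - C ·)).prod ^ m := by
      rw [hr, Multiset.map_nsmul, Multiset.prod_nsmul]

variable {R : Type*} [CommRing R]

theorem X_sub_C_mul_derivative_pow_mul (a : R) (n : ℕ) (u : R[X]) :
    (X - C a) * derivative ((X - C a) ^ n * u)
      = (X - C a) ^ n * (C (n : R) * u + (X - C a) * derivative u) := by
  rcases n with _ | n
  · simp
  · rw [derivative_mul, derivative_X_sub_C_pow, Nat.add_sub_cancel]
    ring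

theorem natCast_rootMultiplicity_eq_mul_of_derivative_mul_eq [IsDomain R] {f g : R[X]}
    (hf : f ≠ 0) (hg : g ≠ 0) {l : R} (h : derivative f * g = C l * (derivative g * f))
    (a : R) : (f.rootMultiplicity a : R) = l * g.rootMultiplicity a := by
  set m₁ := f.rootMultiplicity a
  set m₂ := g.rootMultiplicity a
  set u₁ := f /ₘ (X - C a) ^ m₁
  set u₂ := g /ₘ (X - C a) ^ m₂
  have hf₁ : (X - C a) ^ m₁ * u₁ = f := pow_mul_divByMonic_rootMultiplicity_eq f a
  have hg₂ : (X - C a) ^ m₂ * u₂ = g := pow_mul_divByMonic_rootMultiplicity_eq g a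
  have hdf := X_sub_C_mul_derivative_pow_mul a m₁ u₁
  have hdg := X_sub_C_mul_derivative_pow_mul a m₂ u₂
  rw [hf₁] at hdf
  rw [hg₂] at hdg
  have hcancel : (C (m₁ : R) * u₁ + (X - C a) * derivative u₁) * u₂
      = C l * ((C (m₂ : R) * u₂ + (X - C a) * derivative u₂) * u₁) := by
    refine mul_left_cancel₀ (pow_ne_zero (m₁ + m₂) (X_sub_C_ne_zero a)) ?_
    -- both sides equal `(X - C a) * h` after substituting `f = (X - C a) ^ m₁ * u₁` etc.
    linear_combination (X - C a) * h - (X - C a) ^ m₂ * u₂ * hdf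
      + (X - C a) * derivative f * hg₂ - C l * (X - C a) * derivative g * hf₁
      + C l * (X - C a) ^ m₁ * u₁ * hdg
  have hev := congrArg (eval a) hcancel
  simp only [eval_mul, eval_add, eval_sub, eval_X, eval_C, sub_self, zero_mul, add_zero] at hev
  have hunits : eval a u₁ * eval a u₂ ≠ 0 := mul_ne_zero
    (eval_divByMonic_pow_rootMultiplicity_ne_zero a hf)
    (eval_divByMonic_pow_rootMultiplicity_ne_zero a hg)
  exact sub_eq_zero.mp <| (mul_eq_zero.mp (by linear_combination hev :
    ((m₁ : R) - l * m₂) * (eval a u₁ * eval a u₂) = 0)).resolve_right hunits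

end Polynomial

theorem flat_semiInvariant_common_power_general
    {k : Type*} [Field k] [IsAlgClosed k] (p : ℕ) [CharP k p]
    (σ₁ σ₂ : k[X])
    (h₁ : 0 < σ₁.natDegree) (h₂ : 0 < σ₂.natDegree)
    (hp : 2 * σ₁.natDegree * σ₂.natDegree < p)
    (l : k)
    (heq : derivative σ₁ * σ₂ = C l * (derivative σ₂ * σ₁)) :
    ∃ (σ : k[X]) (m h : ℕ) (lam₁ lam₂ : k),
      Nat.Coprime m h ∧ 0 < m ∧ 0 < h ∧ lam₁ ≠ 0 ∧ lam₂ ≠ 0 ∧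
      σ₁ = C lam₁ * σ ^ m ∧ σ₂ = C lam₂ * σ ^ h := by
  classical
  have hσ₁ : σ₁ ≠ 0 := ne_zero_of_natDegree_gt h₁
  have hσ₂ : σ₂ ≠ 0 := ne_zero_of_natDegree_gt h₂
  have hcard₁ := (IsAlgClosed.splits σ₁).natDegree_eq_card_roots
  have hcard₂ := (IsAlgClosed.splits σ₂).natDegree_eq_card_roots
  have hcount (a : k) : (σ₁.roots.count a : k) = l * σ₂.roots.count a := by
    simpa only [count_roots] using
      natCast_rootMultiplicity_eq_mul_of_derivative_mul_eq hσ₁ hσ₂ heq a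
  have hroots := Multiset.card_nsmul_eq_card_nsmul_of_natCast_count_eq_mul p hcount
    (by rw [← hcard₁, ← hcard₂]; nlinarith)
  obtain ⟨r, m, h, hmh, hm, hh, hr₁, hr₂⟩ :=
    Multiset.exists_coprime_nsmul_eq_of_nsmul_eq (hcard₁ ▸ h₁) (hcard₂ ▸ h₂) hroots
  exact ⟨(r.map (X - C ·)).prod, m, h, _, _, hmh, hm, hh, leadingCoeff_ne_zero.mpr hσ₁,
    leadingCoeff_ne_zero.mpr hσ₂, (IsAlgClosed.splits σ₁).eq_C_leadingCoeff_mul_pow hr₁,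
    (IsAlgClosed.splits σ₂).eq_C_leadingCoeff_mul_pow hr₂⟩

/-- over an algebraically closed field of characteristic `p > 0`, if
`2·d₁·d₂ < p` and the flat weight-1 form `dt/t` is semi-invariant for `(σ₁, σ₂)`
(i.e. `σ₁'·σ₂ = l·σ₂'·σ₁`), then `σ₁ = λ₁·σ^m` and `σ₂ = λ₂·σ^h` for a common polynomial
`σ` and coprime positive integers `m, h`. -/
theorem flat_semiInvariant_common_power
    {k : Type*} [Field k] [IsAlgClosed k] (p : ℕ) [Fact p.Prime] [CharP k p]
    (σ₁ σ₂ : k[X])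
    (h₁ : 0 < σ₁.natDegree) (h₂ : 0 < σ₂.natDegree)
    (hp : 2 * σ₁.natDegree * σ₂.natDegree < p)
    (l : k) (hl : l ≠ 0)
    (heq : derivative σ₁ * σ₂ = C l * (derivative σ₂ * σ₁)) :
    ∃ (σ : k[X]) (m h : ℕ) (lam₁ lam₂ : k),
      Nat.Coprime m h ∧ 0 < m ∧ 0 < h ∧ lam₁ ≠ 0 ∧ lam₂ ≠ 0 ∧
      σ₁ = C lam₁ * σ ^ m ∧ σ₂ = C lam₂ * σ ^ h :=
  flat_semiInvariant_common_power_general p σ₁ σ₂ h₁ h₂ hp l heq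
end

section
/- Let F be a number field with ring of integers 𝒪_F and let σ₁, σ₂ ∈ F[t] be nonconstant polynomials. Suppose there are infinitely many maximal ideals 𝔭 of 𝒪_F such that all coefficients of σ₁ and σ₂ are 𝔭-integral, the leading coefficients of σ₁ and σ₂ are 𝔭-units, and the reductions σ̄₁, σ̄₂ ∈ k_𝔭[t] modulo 𝔭 satisfy σ̄₁′·σ̄₂ = l·σ̄₂′·σ̄₁ for some nonzero l in the residue field k_𝔭 (i.e. the flat weight-1 form dt/t is semi-invariant for the reduced correspondence). Then there exist a polynomial σ ∈ F[t], coprime positive integers m and h, and constants λ₁, λ₂ ∈ F∖{0} such that σ₁ = λ₁·σ^m and σ₂ = λ₂·σ^h. -/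
/-!
Clearing denominators, the reductions of `σ₁'σ₂` and `σ₂'σ₁` are proportional at infinitely many
primes, so every `2 × 2` minor of their coefficient vectors lies in infinitely many primes and
therefore vanishes: `σ₁'σ₂ = l·σ₂'σ₁` already in `F[t]`. Comparing leading coefficients gives
`l = deg σ₁ / deg σ₂ = m / h` with `m, h` coprime, so `h·σ₁'/σ₁ = m·σ₂'/σ₂`: the Wronskian of
`σ₁ ^ h` and `σ₂ ^ m` vanishes and `σ₁ ^ h = c·σ₂ ^ m`. As `F[t]` is integrally closed and `m, h`
are coprime, `σ₁` and `σ₂` are then, up to constants, the `m`-th and `h`-th powers of a single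
polynomial.
-/

open Polynomial

theorem IsIntegrallyClosed.pow_eq_pow_iff_of_coprime {R : Type*} [CommRing R] [IsDomain R]
    [IsIntegrallyClosed R] {a b : R} {m n : ℕ} (hmn : m.Coprime n) :
    a ^ m = b ^ n ↔ ∃ c, a = c ^ n ∧ b = c ^ m := by
  refine ⟨fun h ↦ ?_, by rintro ⟨c, rfl, rfl⟩; rw [← pow_mul, ← pow_mul']⟩
  let K := FractionRing R
  obtain ⟨t, ha, hb⟩ := (_root_.pow_eq_pow_iff_of_coprime (α := K) hmn).1
    (by rw [← map_pow, ← map_pow, h] : algebraMap R K a ^ m = algebraMap R K b ^ n)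
  obtain ⟨c, rfl⟩ : ∃ c, algebraMap R K c = t := by
    rcases n.eq_zero_or_pos with rfl | hn
    · rw [Nat.coprime_zero_right] at hmn
      exact ⟨b, by simpa [hmn] using hb⟩
    · exact IsIntegrallyClosed.isIntegral_iff.1
        ⟨X ^ n - C a, monic_X_pow_sub_C a hn.ne', by simp [ha]⟩
  exact ⟨c, IsFractionRing.injective R K (by simpa using ha),
    IsFractionRing.injective R K (by simpa using hb)⟩

theorem exists_associated_pow_of_associated_pow_of_coprime {R : Type*} [CommRing R] [IsDomain R]
    [IsIntegrallyClosed R] {x y : R} {m h : ℕ} (hmh : m.Coprime h)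
    (hxy : Associated (x ^ h) (y ^ m)) : ∃ z, Associated (z ^ m) x ∧ Associated (z ^ h) y := by
  obtain ⟨u, hu⟩ := hxy
  have hbez : (m : ℤ) * m.gcdA h + h * m.gcdB h = 1 := by
    rw [← Nat.gcd_eq_gcd_ab, hmh, Nat.cast_one]
  -- Bézout: `u = u ^ (m a + h b)` is shared out so that both sides become exact powers
  have hsplit : (u ^ m.gcdB h) ^ h = u * (u ^ (-m.gcdA h)) ^ m := by
    rw [← zpow_natCast, ← zpow_natCast, ← zpow_mul, ← zpow_mul, ← zpow_one_add]
    congr 1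
    linarith
  obtain ⟨z, hxz, hyz⟩ := (IsIntegrallyClosed.pow_eq_pow_iff_of_coprime hmh.symm).1
    (show (x * ↑(u ^ m.gcdB h)) ^ h = (y * ↑(u ^ (-m.gcdA h))) ^ m by
      rw [mul_pow, mul_pow, ← hu, ← Units.val_pow_eq_pow_val, ← Units.val_pow_eq_pow_val,
        hsplit, Units.val_mul, mul_assoc])
  exact ⟨z, (show Associated x (z ^ m) from ⟨_, hxz⟩).symm,
    (show Associated y (z ^ h) from ⟨_, hyz⟩).symm⟩

namespace Polynomial

theorem exists_eq_C_mul_of_associated {K : Type*} [Field K] {p q : K[X]} (h : Associated p q) :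
    ∃ c, c ≠ 0 ∧ q = C c * p := by
  obtain ⟨u, rfl⟩ := h
  obtain ⟨c, hc, hcu⟩ := isUnit_iff.1 u.isUnit
  exact ⟨c, hc.ne_zero, by rw [hcu, mul_comm]⟩

theorem exists_eq_C_mul_of_coeff_mul_coeff_eq {K : Type*} [Field K] {a b : K[X]} (hb : b ≠ 0)
    (h : ∀ i j, a.coeff i * b.coeff j = a.coeff j * b.coeff i) : ∃ l, a = C l * b := by
  refine ⟨a.coeff b.natDegree / b.leadingCoeff, ext fun i ↦ ?_⟩
  rw [coeff_C_mul, div_mul_eq_mul_div, eq_div_iff (leadingCoeff_ne_zero.2 hb), leadingCoeff, h]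

theorem associated_of_wronskian_eq_zero {K : Type*} [Field K] [CharZero K] {f g : K[X]}
    (hf : f ≠ 0) (hg : g ≠ 0) (hw : wronskian f g = 0) : Associated f g := by
  obtain ⟨f₀, g₀, d, hcop, rfl, rfl⟩ := UniqueFactorizationMonoid.exists_reduced_factors' f g hg
  have hd : d ≠ 0 := left_ne_zero_of_mul hg
  have hw₀ : wronskian f₀ g₀ = 0 := by
    have : wronskian (d * f₀) (d * g₀) = d ^ 2 * wronskian f₀ g₀ := by
      simp only [wronskian, derivative_mul]; ring
    exact (mul_eq_zero.1 (this ▸ hw)).resolve_left (pow_ne_zero 2 hd)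
  obtain ⟨hf₀, hg₀⟩ := hcop.isCoprime.wronskian_eq_zero_iff.1 hw₀
  have isUnit_of_derivative_eq_zero {p : K[X]} (hp : p ≠ 0) (hp' : derivative p = 0) :
      IsUnit p := by
    rw [isUnit_iff_degree_eq_zero, degree_eq_natDegree hp, derivative_eq_zero.1 hp']; rfl
  exact (associated_of_dvd_dvd
    (isUnit_of_derivative_eq_zero (right_ne_zero_of_mul hf) hf₀).dvd
    (isUnit_of_derivative_eq_zero (right_ne_zero_of_mul hg) hg₀).dvd).mul_left d

theorem wronskian_pow_pow_eq_zero {R : Type*} [CommRing R] {f g : R[X]} {m h : ℕ}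
    (hm : 0 < m) (hh : 0 < h) (hfg : (h : R[X]) * (derivative f * g) = m * (f * derivative g)) :
    wronskian (f ^ h) (g ^ m) = 0 := by
  obtain ⟨m, rfl⟩ : ∃ k, m = k + 1 := ⟨m - 1, by omega⟩
  obtain ⟨h, rfl⟩ : ∃ k, h = k + 1 := ⟨h - 1, by omega⟩
  simp only [wronskian, derivative_pow_succ, C_add, C_1, C_eq_natCast]
  push_cast at hfg
  linear_combination (-(f ^ h * g ^ m)) * hfg

theorem natDegree_eq_mul_natDegree_of_derivative_mul_eq {R : Type*} [CommRing R] [IsDomain R]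
    [CharZero R] {f g : R[X]} (hf : f ≠ 0) (hg : g ≠ 0) {l : R}
    (hfg : derivative f * g = C l * (derivative g * f)) : (f.natDegree : R) = l * g.natDegree := by
  have := congrArg leadingCoeff hfg
  simp only [leadingCoeff_mul, leadingCoeff_C, leadingCoeff_derivative] at this
  exact mul_right_cancel₀ (mul_ne_zero (leadingCoeff_ne_zero.2 hf) (leadingCoeff_ne_zero.2 hg))
    (by linear_combination this)

theorem exists_coprime_associated_pow_of_derivative_mul_eq {K : Type*} [Field K] [CharZero K]
    {f g : K[X]} (hf : 0 < f.natDegree) (hg : 0 < g.natDegree) {l : K}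
    (hfg : derivative f * g = C l * (derivative g * f)) :
    ∃ m h : ℕ, m.Coprime h ∧ 0 < m ∧ 0 < h ∧ Associated (f ^ h) (g ^ m) := by
  have hf₀ : f ≠ 0 := ne_zero_of_natDegree_gt hf
  have hg₀ : g ≠ 0 := ne_zero_of_natDegree_gt hg
  have hdeg := natDegree_eq_mul_natDegree_of_derivative_mul_eq hf₀ hg₀ hfg
  obtain ⟨m, h, hmh, hfm, hgh⟩ := Nat.exists_coprime f.natDegree g.natDegree
  have hm : 0 < m := Nat.pos_of_mul_pos_right (hfm ▸ hf)
  have hh : 0 < h := Nat.pos_of_mul_pos_right (hgh ▸ hg)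
  have hml : (m : K) = l * h := by
    apply mul_right_cancel₀ (Nat.cast_ne_zero.2 (Nat.gcd_pos_of_pos_left _ hf).ne')
    rw [mul_assoc, ← Nat.cast_mul, ← Nat.cast_mul, ← hfm, ← hgh, hdeg]
  refine ⟨m, h, hmh, hm, hh, associated_of_wronskian_eq_zero (pow_ne_zero _ hf₀)
    (pow_ne_zero _ hg₀) (wronskian_pow_pow_eq_zero hm hh ?_)⟩
  rw [hfg, ← C_eq_natCast, ← C_eq_natCast, hml, C_mul]
  ring

end Polynomial

section Reduction

variable {R K : Type*} [CommRing R] [CommRing K] [Algebra R K]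

/-- The reductions modulo `𝔭` of `a` and `b` are proportional, after making both `𝔭`-integral
by a common factor `s ∉ 𝔭`. -/
def ProportionalModulo (𝔭 : Ideal R) (a b : K[X]) : Prop :=
  ∃ s ∉ 𝔭, ∃ P Q : R[X], P.map (algebraMap R K) = C (algebraMap R K s) * a ∧
    Q.map (algebraMap R K) = C (algebraMap R K s) * b ∧
    ∃ l : R ⧸ 𝔭, P.map (Ideal.Quotient.mk 𝔭) = C l * Q.map (Ideal.Quotient.mk 𝔭)

theorem proportionalModulo_derivative_mul {𝔭 : Ideal R} (h𝔭 : 𝔭.IsPrime) {σ₁ σ₂ : K[X]}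
    {A₁ A₂ : R[X]} {s₁ s₂ : R} (hs₁ : s₁ ∉ 𝔭) (hs₂ : s₂ ∉ 𝔭)
    (hA₁ : A₁.map (algebraMap R K) = C (algebraMap R K s₁) * σ₁)
    (hA₂ : A₂.map (algebraMap R K) = C (algebraMap R K s₂) * σ₂) {l : R ⧸ 𝔭}
    (hl : derivative (A₁.map (Ideal.Quotient.mk 𝔭)) * A₂.map (Ideal.Quotient.mk 𝔭)
      = C l * (derivative (A₂.map (Ideal.Quotient.mk 𝔭)) * A₁.map (Ideal.Quotient.mk 𝔭))) :
    ProportionalModulo 𝔭 (derivative σ₁ * σ₂) (derivative σ₂ * σ₁) := by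
  refine ⟨s₁ * s₂, h𝔭.mul_notMem hs₁ hs₂, derivative A₁ * A₂, derivative A₂ * A₁, ?_, ?_, l, ?_⟩
  · simp only [Polynomial.map_mul, ← derivative_map, hA₁, hA₂, derivative_C_mul, map_mul]
    ring
  · simp only [Polynomial.map_mul, ← derivative_map, hA₁, hA₂, derivative_C_mul, map_mul]
    ring
  · simpa only [Polynomial.map_mul, ← derivative_map] using hl

variable [Ring.HasFiniteQuotients R] [IsFractionRing R K]

theorem eq_zero_of_infinite_setOf_smul_mem {x : K}
    (h : {𝔭 : Ideal R | 𝔭.IsPrime ∧ ∃ s ∉ 𝔭, ∃ N ∈ 𝔭, algebraMap R K N = s • x}.Infinite) :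
    x = 0 := by
  obtain ⟨⟨a, b⟩, hab⟩ := IsLocalization.surj (nonZeroDivisors R) x
  suffices a = 0 from (IsLocalization.map_units K b).mul_left_eq_zero.1 (by simpa [this] using hab)
  by_contra ha
  refine (Ring.HasFiniteQuotients.finite_setOfPred_mem a ha).not_infinite (h.mono ?_)
  rintro 𝔭 ⟨h𝔭, s, hs, N, hN, hNx⟩
  have hNb : N * b = s * a := IsFractionRing.injective R K <| by
    rw [map_mul, map_mul, hNx, ← hab, Algebra.smul_def]; ring
  exact (h𝔭.mem_or_mem (hNb ▸ 𝔭.mul_mem_right _ hN)).resolve_left hs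

theorem coeff_mul_coeff_eq_of_infinite_setOf_proportionalModulo {a b : K[X]}
    (h : {𝔭 : Ideal R | 𝔭.IsPrime ∧ ProportionalModulo 𝔭 a b}.Infinite) (i j : ℕ) :
    a.coeff i * b.coeff j = a.coeff j * b.coeff i := by
  rw [← sub_eq_zero]
  refine eq_zero_of_infinite_setOf_smul_mem (h.mono ?_)
  rintro 𝔭 ⟨h𝔭, s, hs, P, Q, hP, hQ, l, hl⟩
  refine ⟨h𝔭, s * s, h𝔭.mul_notMem hs hs, P.coeff i * Q.coeff j - P.coeff j * Q.coeff i, ?_, ?_⟩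
  · rw [← Ideal.Quotient.eq_zero_iff_mem]
    simp only [map_sub, map_mul, ← coeff_map, hl, coeff_C_mul]
    ring
  · simp only [map_sub, map_mul, ← coeff_map, hP, hQ, coeff_C_mul, Algebra.smul_def]
    ring

end Reduction

/-- over a number field `F`, if for infinitely many maximal ideals `𝔭` of the
ring of integers the polynomials `σ₁, σ₂` have `𝔭`-integral coefficients (expressed by
clearing a denominator `sᵢ ∉ 𝔭`: `sᵢ·σᵢ = Aᵢ` with `Aᵢ` integral), `𝔭`-unit leading
coefficients, and reductions mod `𝔭` satisfying `σ̄₁'·σ̄₂ = l·σ̄₂'·σ̄₁` for some nonzero `l`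
in the residue field (i.e. `dt/t` is semi-invariant for the reduced correspondence), then
`σ₁ = λ₁·σ^m` and `σ₂ = λ₂·σ^h` for some `σ ∈ F[t]`, coprime positive integers `m, h`, and
nonzero constants `λ₁, λ₂`. -/
theorem numberField_flat_weight_one_infinitely_many_places
    {F : Type*} [Field F] [NumberField F]
    (σ₁ σ₂ : F[X]) (h₁ : 0 < σ₁.natDegree) (h₂ : 0 < σ₂.natDegree)
    (hinf : {𝔭 : Ideal (NumberField.RingOfIntegers F) | 𝔭.IsMaximal ∧
      ∃ (A₁ A₂ : Polynomial (NumberField.RingOfIntegers F))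
        (s₁ s₂ : NumberField.RingOfIntegers F),
        s₁ ∉ 𝔭 ∧ s₂ ∉ 𝔭 ∧
        A₁.map (algebraMap (NumberField.RingOfIntegers F) F)
          = C (algebraMap (NumberField.RingOfIntegers F) F s₁) * σ₁ ∧
        A₂.map (algebraMap (NumberField.RingOfIntegers F) F)
          = C (algebraMap (NumberField.RingOfIntegers F) F s₂) * σ₂ ∧
        A₁.leadingCoeff ∉ 𝔭 ∧ A₂.leadingCoeff ∉ 𝔭 ∧
        ∃ l : NumberField.RingOfIntegers F ⧸ 𝔭, l ≠ 0 ∧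
          derivative (A₁.map (Ideal.Quotient.mk 𝔭)) * A₂.map (Ideal.Quotient.mk 𝔭)
            = C l * (derivative (A₂.map (Ideal.Quotient.mk 𝔭))
                * A₁.map (Ideal.Quotient.mk 𝔭))}.Infinite) :
    ∃ (σ : F[X]) (m h : ℕ) (lam₁ lam₂ : F),
      Nat.Coprime m h ∧ 0 < m ∧ 0 < h ∧ lam₁ ≠ 0 ∧ lam₂ ≠ 0 ∧
      σ₁ = C lam₁ * σ ^ m ∧ σ₂ = C lam₂ * σ ^ h := by
  have hproportional : {𝔭 : Ideal (NumberField.RingOfIntegers F) | 𝔭.IsPrime ∧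
      ProportionalModulo 𝔭 (derivative σ₁ * σ₂) (derivative σ₂ * σ₁)}.Infinite := by
    refine hinf.mono ?_
    rintro 𝔭 ⟨h𝔭, A₁, A₂, s₁, s₂, hs₁, hs₂, hA₁, hA₂, -, -, l, -, hl⟩
    exact ⟨h𝔭.isPrime, proportionalModulo_derivative_mul h𝔭.isPrime hs₁ hs₂ hA₁ hA₂ hl⟩
  obtain ⟨l, hl⟩ := exists_eq_C_mul_of_coeff_mul_coeff_eq
    (mul_ne_zero (derivative_ne_zero.2 h₂.ne') (ne_zero_of_natDegree_gt h₁))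
    (coeff_mul_coeff_eq_of_infinite_setOf_proportionalModulo hproportional)
  obtain ⟨m, h, hmh, hm, hh, hassoc⟩ := exists_coprime_associated_pow_of_derivative_mul_eq h₁ h₂ hl
  obtain ⟨σ, hσ₁, hσ₂⟩ := exists_associated_pow_of_associated_pow_of_coprime hmh hassoc
  obtain ⟨lam₁, hlam₁, rfl⟩ := exists_eq_C_mul_of_associated hσ₁
  obtain ⟨lam₂, hlam₂, rfl⟩ := exists_eq_C_mul_of_associated hσ₂
  exact ⟨σ, m, h, lam₁, lam₂, hmh, hm, hh, hlam₁, hlam₂, rfl, rfl⟩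
end
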